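/- arXiv:2205.13442 — 9 statements merged into one kernel-verified Lean document; each statement's English description precedes it below -/
import Mathlib

section
/- Let a, b be rational numbers satisfying a·b = (3/2)·(a+b) with 2·b ≠ 3, so that a = 3b/(2b-3). If b = m/n in lowest terms with n > 0 and a^3 + a^2·b^2 + b^3 is an integer, then n divides 8. -/
/-- If `a*b = (3/2)*(a+b)` with `2*b ≠ 3`, `b = m/n` in lowest terms with `n > 0`, and
`a^3 + a^2*b^2 + b^3` is an integer, then `n` divides `8`. -/
theorem stmt_3 (a b : ℚ) (m n : ℤ) (hab : a * b = (3 / 2) * (a + b)) (hb : 2 * b ≠ 3)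
    (hmn : IsCoprime m n) (hn : 0 < n) (hbmn : b = (m : ℚ) / (n : ℚ))
    (hint : ∃ K : ℤ, a ^ 3 + a ^ 2 * b ^ 2 + b ^ 3 = (K : ℚ)) :
    n ∣ 8 := by
  obtain ⟨K, hK⟩ := hint
  have hnz : n ≠ 0 := hn.ne'
  have hn0 : (n : ℚ) ≠ 0 := Int.cast_ne_zero.mpr hnz
  have hb3 : 2 * b - 3 ≠ 0 := sub_ne_zero.mpr hb
  have hd2 : 2 * (m:ℚ) - 3 * (n:ℚ) ≠ 0 := by
    intro h
    apply hb3
    rw [hbmn]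
    field_simp
    linarith
  have hd : (2 * m - 3 * n : ℤ) ≠ 0 := by
    intro h
    apply hd2
    have := congrArg (Int.cast : ℤ → ℚ) h
    push_cast at this
    linarith
  have ha : a = 3 * b / (2 * b - 3) := by
    rw [eq_div_iff hb3]
    linear_combination 2 * hab
  rw [ha, hbmn] at hK
  have key : K * (n ^ 3 * (2 * m - 3 * n) ^ 3)
      = 27 * m ^ 3 * n ^ 3 + 9 * m ^ 4 * n * (2 * m - 3 * n) + m ^ 3 * (2 * m - 3 * n) ^ 3 := by
    have hrw : 2 * ((m:ℚ)/n) - 3 = (2*(m:ℚ)-3*n)/n := by field_simp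
    rw [hrw] at hK
    have hKint : ((3*m)^3*((2*m-3*n)^2*n^2)+(3*m)^2*m^2*(2*m-3*n)^3)*n^3
        + m^3*((2*m-3*n)^3*((2*m-3*n)^2*n^2)) = K*((2*m-3*n)^3*((2*m-3*n)^2*n^2)*n^3) := by
      have hq : ((3*(m:ℚ))^3*((2*(m:ℚ)-3*(n:ℚ))^2*(n:ℚ)^2)+(3*(m:ℚ))^2*(m:ℚ)^2*(2*(m:ℚ)-3*(n:ℚ))^3)*(n:ℚ)^3
          + (m:ℚ)^3*((2*(m:ℚ)-3*(n:ℚ))^3*((2*(m:ℚ)-3*(n:ℚ))^2*(n:ℚ)^2)) = (K:ℚ)*((2*(m:ℚ)-3*(n:ℚ))^3*((2*(m:ℚ)-3*(n:ℚ))^2*(n:ℚ)^2)*(n:ℚ)^3) := by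
        have h3 : 3*((m:ℚ)/n)/((2*(m:ℚ)-3*n)/n) = 3*m/(2*(m:ℚ)-3*n) := by field_simp
        rw [← hK, h3]
        generalize (2*(m:ℚ)-3*n) = d at hd2 ⊢
        field_simp
      exact_mod_cast hq
    have hc : ((2*m-3*n)^2*n^2 : ℤ) ≠ 0 := mul_ne_zero (pow_ne_zero _ hd) (pow_ne_zero _ hnz)
    apply mul_right_cancel₀ hc
    linear_combination -hKint
  have hdvd : n ∣ m ^ 3 * (2 * m - 3 * n) ^ 3 := by
    have h : m ^ 3 * (2 * m - 3 * n) ^ 3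
        = K * (n ^ 3 * (2 * m - 3 * n) ^ 3) - 27 * m ^ 3 * n ^ 3
          - 9 * m ^ 4 * n * (2 * m - 3 * n) := by linear_combination -key
    rw [h]
    exact dvd_sub (dvd_sub ⟨K * (n^2 * (2*m-3*n)^3), by ring⟩ ⟨27*m^3*n^2, by ring⟩)
      ⟨9*m^4*(2*m-3*n), by ring⟩
  have hcop : IsCoprime n (m ^ 3) := hmn.symm.pow_right
  have hd3 : n ∣ (2 * m - 3 * n) ^ 3 := by
    rw [mul_comm] at hdvd
    exact hcop.dvd_of_dvd_mul_right hdvd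
  have h8 : n ∣ 8 * m ^ 3 := by
    have h : 8 * m ^ 3 = (2 * m - 3 * n) ^ 3 + n * (36 * m ^ 2 - 54 * m * n + 27 * n ^ 2) := by
      ring
    rw [h]
    exact dvd_add hd3 ⟨36 * m ^ 2 - 54 * m * n + 27 * n ^ 2, rfl⟩
  exact hcop.dvd_of_dvd_mul_right h8
end

section
/- The only integers a such that (2a-3) divides 27·a^3 and such that k = (3a/(2a-3))^3 + (3a/(2a-3))^2·a^2 + a^3 is an integer give k ∈ {-17, 0, 135, 368}. -/
/-- The only integers `a` with `(2a-3) ∣ 27*a^3` for which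
`k = (3a/(2a-3))^3 + (3a/(2a-3))^2*a^2 + a^3` is an integer give `k ∈ {-17, 0, 135, 368}`. -/
theorem stmt_5 (a : ℤ) (ha : 2 * a - 3 ≠ 0) (hdvd : (2 * a - 3) ∣ 27 * a ^ 3) (k : ℤ)
    (hk : (k : ℚ) = (3 * (a : ℚ) / (2 * (a : ℚ) - 3)) ^ 3
        + (3 * (a : ℚ) / (2 * (a : ℚ) - 3)) ^ 2 * (a : ℚ) ^ 2 + (a : ℚ) ^ 3) :
    k = -17 ∨ k = 0 ∨ k = 135 ∨ k = 368 := by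
  have h8 : (2*a-3) ∣ 8 * (27 * a^3) := Dvd.dvd.mul_left hdvd 8
  have hs : (2*a-3) ∣ (2*a-3)*(108*a^2+162*a+243) := Dvd.intro _ rfl
  have h729 : (2*a-3) ∣ 729 := by
    have := dvd_sub h8 hs
    have e : (729:ℤ) = 8 * (27 * a^3) - (2*a-3)*(108*a^2+162*a+243) := by ring
    rw [e]; exact this
  have hd : (2*a-3).natAbs ∣ 3^6 := by
    have := Int.natAbs_dvd_natAbs.mpr h729
    simpa using this
  clear hdvd h8 hs h729
  obtain ⟨i, hi, hn⟩ := (Nat.dvd_prime_pow Nat.prime_three).mp hd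
  interval_cases i <;> norm_num at hn
  · have hav : a = 2 ∨ a = 1 := by omega
    rcases hav with h | h <;> subst h
    · have hq : (k:ℚ) = 368 := by rw [hk]; norm_num
      have : k = 368 := by exact_mod_cast hq
      exact Or.inr (Or.inr (Or.inr this))
    · have hq : (k:ℚ) = -17 := by rw [hk]; norm_num
      have : k = -17 := by exact_mod_cast hq
      exact Or.inl this
  · have hav : a = 3 ∨ a = 0 := by omega
    rcases hav with h | h <;> subst h
    · have hq : (k:ℚ) = 135 := by rw [hk]; norm_num
      have : k = 135 := by exact_mod_cast hq
      exact Or.inr (Or.inr (Or.inl this))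
    · have hq : (k:ℚ) = 0 := by rw [hk]; norm_num
      have : k = 0 := by exact_mod_cast hq
      exact Or.inr (Or.inl this)
  · have hav : a = 6 ∨ a = -3 := by omega
    rcases hav with h | h <;> subst h
    · have hq : (k:ℚ) = 368 := by rw [hk]; norm_num
      have : k = 368 := by exact_mod_cast hq
      exact Or.inr (Or.inr (Or.inr this))
    · have hq : (k:ℚ) = -17 := by rw [hk]; norm_num
      have : k = -17 := by exact_mod_cast hq
      exact Or.inl this
  · have hav : a = 15 ∨ a = -12 := by omega
    rcases hav with h | h <;> subst h
    · exfalso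
      have hq : (27:ℚ)*k = 108125 := by rw [hk]; norm_num
      have : (27:ℤ)*k = 108125 := by exact_mod_cast hq
      omega
    · exfalso
      have hq : (27:ℚ)*k = -39680 := by rw [hk]; norm_num
      have : (27:ℤ)*k = -39680 := by exact_mod_cast hq
      omega
  · have hav : a = 42 ∨ a = -39 := by omega
    rcases hav with h | h <;> subst h
    · exfalso
      have hq : (729:ℚ)*k = 57124592 := by rw [hk]; norm_num
      have : (729:ℤ)*k = 57124592 := by exact_mod_cast hq
      omega
    · exfalso
      have hq : (729:ℚ)*k = -40927913 := by rw [hk]; norm_num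
      have : (729:ℤ)*k = -40927913 := by exact_mod_cast hq
      omega
  · have hav : a = 123 ∨ a = -120 := by omega
    rcases hav with h | h <;> subst h
    · exfalso
      have hq : (19683:ℚ)*k = 37314174005 := by rw [hk]; norm_num
      have : (19683:ℤ)*k = 37314174005 := by exact_mod_cast hq
      omega
    · exfalso
      have hq : (19683:ℚ)*k = -33390080000 := by rw [hk]; norm_num
      have : (19683:ℤ)*k = -33390080000 := by exact_mod_cast hq
      omega
  · have hav : a = 366 ∨ a = -363 := by omega
    rcases hav with h | h <;> subst h
    · exfalso
      have hq : (531441:ℚ)*k = 26216933783408 := by rw [hk]; norm_num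
      have : (531441:ℤ)*k = 26216933783408 := by exact_mod_cast hq
      omega
    · exfalso
      have hq : (531441:ℚ)*k = -25263694638017 := by rw [hk]; norm_num
      have : (531441:ℤ)*k = -25263694638017 := by exact_mod_cast hq
      omega
end

section
/- Let u, v be coprime integers with u + v ≠ 0 and u - 3v ≠ 0. If (u+v)^3·(u-3v) divides u^3·(-2u - 3v) (equivalently, k = u^3·(-2u-3v)/((u+v)^3·(u-3v)) is an integer), then (u+v)^3·(u-3v) divides 243. -/
/-- If `u, v` are coprime integers with `u+v ≠ 0`, `u-3v ≠ 0`, and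
`(u+v)^3*(u-3v)` divides `u^3*(-2u-3v)`, then `(u+v)^3*(u-3v)` divides `243`. -/
theorem stmt_6 (u v : ℤ) (huv : IsCoprime u v) (h1 : u + v ≠ 0) (h2 : u - 3 * v ≠ 0)
    (hdvd : (u + v) ^ 3 * (u - 3 * v) ∣ u ^ 3 * (-2 * u - 3 * v)) :
    (u + v) ^ 3 * (u - 3 * v) ∣ 243 := by
  set d : ℤ := (u + v) ^ 3 * (u - 3 * v) with hd
  obtain ⟨k, hk⟩ := hdvd
  have hv : d ∣ 243 * v ^ 7 :=
    ⟨(-81 * v ^ 3 + 216 * u * v ^ 2 - 414 * u ^ 2 * v - 524 * u ^ 3) +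
      (1196 * v ^ 3 + 1401 * u * v ^ 2 + 186 * u ^ 2 * v - 262 * u ^ 3) * k, by
        linear_combination (1196 * v ^ 3 + 1401 * u * v ^ 2 + 186 * u ^ 2 * v - 262 * u ^ 3) * hk⟩
  have hu : d ∣ u ^ 7 :=
    ⟨9 * u ^ 3 + (4 * u ^ 3 - 6 * u ^ 2 * v - 18 * u * v ^ 2 - 9 * v ^ 3) * k, by
        linear_combination (4 * u ^ 3 - 6 * u ^ 2 * v - 18 * u * v ^ 2 - 9 * v ^ 3) * hk⟩
  obtain ⟨a, b, hab⟩ := (huv.pow (m := 7) (n := 7))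
  have : (243 : ℤ) = 243 * a * u ^ 7 + b * (243 * v ^ 7) := by linear_combination (-243) * hab
  rw [this]
  exact dvd_add (hu.mul_left (243 * a)) (hv.mul_left b)
end

section
/- The only integers k of the form k = u^3·(-2u - 3v)/((u+v)^3·(u - 3v)) with u, v coprime integers are k ∈ {-72, -2, 0, 2058, -56000}. -/
/-- The only integers `k` of the form `u^3*(-2u-3v)/((u+v)^3*(u-3v))` with `u, v` coprime
are `k ∈ {-72, -2, 0, 2058, -56000}`. -/
theorem stmt_7 (u v : ℤ) (huv : IsCoprime u v) (hne : (u + v) * (u - 3 * v) ≠ 0) (k : ℤ)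
    (hk : (k : ℚ) = (u : ℚ) ^ 3 * (-2 * (u : ℚ) - 3 * (v : ℚ))
        / (((u : ℚ) + (v : ℚ)) ^ 3 * ((u : ℚ) - 3 * (v : ℚ)))) :
    k = -72 ∨ k = -2 ∨ k = 0 ∨ k = 2058 ∨ k = -56000 := by
  have h1 : (u : ℤ) + v ≠ 0 := fun h => hne (by rw [h, zero_mul])
  have h2 : (u : ℤ) - 3 * v ≠ 0 := fun h => hne (by rw [h, mul_zero])
  have h1q : ((u : ℚ) + v) ≠ 0 := by exact_mod_cast fun h => h1 (by exact_mod_cast h)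
  have h2q : ((u : ℚ) - 3 * v) ≠ 0 := by exact_mod_cast fun h => h2 (by exact_mod_cast h)
  have keyQ : (((u : ℚ) + v) ^ 3 * ((u : ℚ) - 3 * v)) * (k : ℚ)
      = (u : ℚ) ^ 3 * (-2 * u - 3 * v) := by
    rw [hk, mul_div_assoc']; exact mul_div_cancel_left₀ _ (mul_ne_zero (pow_ne_zero 3 h1q) h2q)
  have key : ((u + v) ^ 3 * (u - 3 * v)) * k = u ^ 3 * (-2 * u - 3 * v) := by
    exact_mod_cast keyQ
  -- u+v is coprime to u, v, and to -2u-3v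
  have hcv : IsCoprime (u + v) v := by
    have := huv.add_mul_left_left 1
    simpa using this
  have hcu : IsCoprime (u + v) u := by
    have := huv.symm.add_mul_left_left 1
    simpa [add_comm] using this
  have hcnum : IsCoprime (u + v) (u ^ 3 * (-2 * u - 3 * v)) := by
    have h3 : IsCoprime (u + v) (-2 * u - 3 * v) := by
      have := (hcv.neg_right).add_mul_left_right (-2)
      have e : -v + (u + v) * -2 = -2 * u - 3 * v := by ring
      rwa [e] at this
    exact (hcu.pow_right).mul_right h3
  have hdvd : (u + v) ∣ u ^ 3 * (-2 * u - 3 * v) :=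
    ⟨(u + v) ^ 2 * (u - 3 * v) * k, by linear_combination -key⟩
  have hunit : IsUnit (u + v) := hcnum.isUnit_of_dvd' dvd_rfl hdvd
  have heps : u + v = 1 ∨ u + v = -1 := Int.isUnit_iff.mp hunit
  rcases heps with heps | heps
  · -- u = 1 - v
    have hu : u = 1 - v := by omega
    subst hu
    have key2 : (1 - 4 * v) * k = (1 - v) ^ 3 * (-2 - v) := by linear_combination key
    have hd : (1 - 4 * v) ∣ 243 :=
      ⟨(-269 + 204 * v + 48 * v ^ 2 - 64 * v ^ 3) - 256 * k, by linear_combination 256 * key2⟩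
    have hb : (1 - 4 * v).natAbs ≤ 243 :=
      Nat.le_of_dvd (by norm_num) (Int.natAbs_dvd_natAbs.mpr hd)
    have hb2 : -60 ≤ v ∧ v ≤ 61 := by omega
    obtain ⟨hb3, hb4⟩ := hb2
    clear hk keyQ key hcv hcu hcnum hdvd hunit hd hne h1 h2 h1q h2q huv hb
    interval_cases v <;> omega
  · have hu : u = -1 - v := by omega
    subst hu
    have key2 : (-1 - 4 * v) * k = -((-1 - v) ^ 3 * (2 - v)) := by linear_combination -key
    have hd : (-1 - 4 * v) ∣ 243 :=
      ⟨(269 + 204 * v - 48 * v ^ 2 - 64 * v ^ 3) + 256 * k, by linear_combination -256 * key2⟩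
    have hb : (-1 - 4 * v).natAbs ≤ 243 :=
      Nat.le_of_dvd (by norm_num) (Int.natAbs_dvd_natAbs.mpr hd)
    have hb2 : -61 ≤ v ∧ v ≤ 60 := by omega
    obtain ⟨hb3, hb4⟩ := hb2
    clear hk keyQ key hcv hcu hcnum hdvd hunit hd hne h1 h2 h1q h2q huv hb
    interval_cases v <;> omega
end

section
/- There are no integers s, t with s^4 - 8·s^3·t + 6·s^2·t^2 - 8·s·t^3 + t^4 = 9. -/
/-- There are no integers `s, t` with `s^4 - 8s^3t + 6s^2t^2 - 8st^3 + t^4 = 9`. -/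
theorem stmt_11 :
    ¬ ∃ s t : ℤ, s ^ 4 - 8 * s ^ 3 * t + 6 * s ^ 2 * t ^ 2 - 8 * s * t ^ 3 + t ^ 4 = 9 := by
  rintro ⟨s, t, h⟩
  have h27 : (s : ZMod 27) ^ 4 - 8 * s ^ 3 * t + 6 * s ^ 2 * t ^ 2 - 8 * s * t ^ 3 + t ^ 4 = 9 := by
    have := congrArg (Int.cast : ℤ → ZMod 27) h
    push_cast at this
    exact this
  exact absurd h27 ((by decide : ∀ a b : ZMod 27,
    ¬ a ^ 4 - 8 * a ^ 3 * b + 6 * a ^ 2 * b ^ 2 - 8 * a * b ^ 3 + b ^ 4 = 9) s t)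
end

section
/- The only integer solutions (s, t) to s^4 - 12·t^4 = 1 are s = ±1, t = 0. -/
section helpers

/-- odd fourth powers are 1 mod 16 -/
private lemma pow4_mod16 {n : ℕ} (hn : n % 2 = 1) : n ^ 4 % 16 = 1 := by
  have h1 : n % 16 < 16 := Nat.mod_lt _ (by norm_num)
  have h2 : n % 16 % 2 = 1 := by omega
  rw [Nat.pow_mod]
  interval_cases h : n % 16 <;> simp_all

private lemma coprime_pow4 {a b c : ℕ} (h : Nat.Coprime a b) (hm : a * b = c ^ 4) :
    ∃ d e, a = d ^ 4 ∧ b = e ^ 4 ∧ c = d * e := by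
  obtain ⟨d, hd⟩ : ∃ d, a = d ^ 4 := by
    refine exists_eq_pow_of_mul_eq_pow ?_ hm
    rw [Nat.isUnit_iff]; exact h.gcd_eq_one
  obtain ⟨e, he⟩ : ∃ e, b = e ^ 4 := by
    refine exists_eq_pow_of_mul_eq_pow ?_ (by rwa [mul_comm] at hm)
    rw [Nat.isUnit_iff]; exact h.symm.gcd_eq_one
  refine ⟨d, e, hd, he, ?_⟩
  have hce : c ^ 4 = (d * e) ^ 4 := by rw [← hm, hd, he]; ring
  exact Nat.pow_left_injective (by norm_num) hce

private lemma not_three_dvd_M (z : ℕ) : ¬ (3 ∣ 2 * z ^ 2 + 2 * z + 1) := by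
  intro h
  have h2 : ((2 * z ^ 2 + 2 * z + 1 : ℕ) : ZMod 3) = 0 :=
    (ZMod.natCast_eq_zero_iff _ _).2 h
  push_cast at h2
  revert h2
  generalize ((z : ZMod 3)) = w
  revert w
  decide

private lemma odd_parts {f g C : ℕ} (hC : C % 2 = 1) (h : C = f * g) :
    f % 2 = 1 ∧ g % 2 = 1 := by
  have hmm := Nat.mul_mod f g 2
  rw [← h] at hmm
  rcases Nat.mod_two_eq_zero_or_one f with hf | hf <;>
    rcases Nat.mod_two_eq_zero_or_one g with hg | hg <;>
      rw [hf, hg] at hmm <;> norm_num at hmm <;> omega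

private lemma two_pow_16 {j : ℕ} (hj : 4 ≤ j) : ∃ d, (2:ℕ) ^ j = 16 * d :=
  ⟨2 ^ (j - 4), by rw [show j = 4 + (j - 4) by omega, pow_add]; norm_num⟩

/-- From `F = z+1`, `z = 3*2^j*G` with `F,G ≡ 1 [MOD 16]`, get `4 ≤ j`. -/
private lemma L_a1 {F G z j : ℕ} (hF : F % 16 = 1) (hG : G % 16 = 1)
    (h1 : z + 1 = F) (h2 : z = 3 * 2 ^ j * G) : 4 ≤ j := by
  by_contra hj
  push_neg at hj
  interval_cases j <;> norm_num at h2 <;> omega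

private lemma L_a2 {F G j : ℕ} (hF : F % 16 = 1) (hG : G % 16 = 1)
    (h : 3 * F = 2 ^ j * G + 1) : j = 1 := by
  rcases (by omega : j = 0 ∨ j = 1 ∨ j = 2 ∨ j = 3 ∨ 4 ≤ j) with rfl | rfl | rfl | rfl | hj
  · norm_num at h; omega
  · rfl
  · norm_num at h; omega
  · norm_num at h; omega
  · obtain ⟨d, hd⟩ := two_pow_16 hj
    rw [hd] at h
    have : 16 * d * G = 16 * (d * G) := by ring
    omega

private lemma L_b1 {F G j : ℕ} (hF : F % 16 = 1) (hG : G % 16 = 1)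
    (h : 3 * 2 ^ j * G = F + 1) : False := by
  rcases (by omega : j = 0 ∨ j = 1 ∨ j = 2 ∨ j = 3 ∨ 4 ≤ j) with rfl | rfl | rfl | rfl | hj
  · norm_num at h; omega
  · norm_num at h; omega
  · norm_num at h; omega
  · norm_num at h; omega
  · obtain ⟨d, hd⟩ := two_pow_16 hj
    rw [hd] at h
    have : 3 * (16 * d) * G = 16 * (3 * d * G) := by ring
    omega

private lemma L_b2 {F G j : ℕ} (hF : F % 16 = 1) (hG : G % 16 = 1)
    (h : 2 ^ j * G = 3 * F + 1) : j = 2 := by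
  rcases (by omega : j = 0 ∨ j = 1 ∨ j = 2 ∨ j = 3 ∨ 4 ≤ j) with rfl | rfl | rfl | rfl | hj
  · norm_num at h; omega
  · norm_num at h; omega
  · rfl
  · norm_num at h; omega
  · obtain ⟨d, hd⟩ := two_pow_16 hj
    rw [hd] at h
    have : 16 * d * G = 16 * (d * G) := by ring
    omega

/-- coprime splitting of `o * e = 3 * 2^j * C^4` with `o` odd. -/
private lemma split {o e j C : ℕ} (hC : C % 2 = 1) (ho : o % 2 = 1)
    (hcop : Nat.Coprime o e) (h : o * e = 3 * 2 ^ j * C ^ 4) :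
    (∃ f g, o = f ^ 4 ∧ e = 3 * 2 ^ j * g ^ 4 ∧ f % 2 = 1 ∧ g % 2 = 1 ∧ C = f * g) ∨
    (∃ f g, o = 3 * f ^ 4 ∧ e = 2 ^ j * g ^ 4 ∧ f % 2 = 1 ∧ g % 2 = 1 ∧ C = f * g) := by
  have hopos : 0 < o := by omega
  have hco2 : Nat.Coprime o 2 := by
    rcases Nat.coprime_or_dvd_of_prime Nat.prime_two o with hc | hd
    · exact hc.symm
    · exfalso; omega
  by_cases h3 : 3 ∣ o
  · right
    obtain ⟨u, rfl⟩ := h3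
    have hupos : 0 < u := by omega
    have huodd : u % 2 = 1 := by omega
    have hue : u * e = 2 ^ j * C ^ 4 := by
      have h' : 3 * (u * e) = 3 * (2 ^ j * C ^ 4) := by
        rw [← mul_assoc, h]; ring
      exact Nat.eq_of_mul_eq_mul_left (by norm_num) h'
    have hcu2 : Nat.Coprime u (2 ^ j) :=
      Nat.Coprime.pow_right j (Nat.Coprime.coprime_dvd_left (dvd_mul_left u 3) hco2)
    have hudvd : u ∣ C ^ 4 := by
      exact hcu2.dvd_of_dvd_mul_left ⟨e, hue.symm⟩
    obtain ⟨w, hw⟩ := hudvd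
    have he : e = 2 ^ j * w := by
      have h' : u * e = u * (2 ^ j * w) := by rw [hue, hw]; ring
      exact Nat.eq_of_mul_eq_mul_left hupos h'
    have hcuw : Nat.Coprime u w := by
      by_contra hcon
      obtain ⟨p, pp, pu, pw⟩ := Nat.Prime.not_coprime_iff_dvd.mp hcon
      have hpe : p ∣ e := he ▸ Dvd.dvd.mul_left pw _
      have hpo : p ∣ 3 * u := Dvd.dvd.mul_left pu 3
      exact absurd (Nat.eq_one_of_dvd_coprimes hcop hpo hpe) pp.ne_one
    obtain ⟨f, g, hf, hg, hfg⟩ := coprime_pow4 hcuw hw.symm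
    obtain ⟨hfo, hgo⟩ := odd_parts hC hfg
    exact ⟨f, g, by rw [hf], by rw [he, hg], hfo, hgo, hfg⟩
  · left
    have hcu3 : Nat.Coprime o 3 := by
      rcases Nat.coprime_or_dvd_of_prime Nat.prime_three o with hc | hd
      · exact hc.symm
      · exact absurd hd h3
    have hco : Nat.Coprime o (3 * 2 ^ j) :=
      Nat.Coprime.mul_right hcu3 (Nat.Coprime.pow_right j hco2)
    have hodvd : o ∣ C ^ 4 := by
      exact hco.dvd_of_dvd_mul_left ⟨e, h.symm⟩
    obtain ⟨w, hw⟩ := hodvd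
    have he : e = 3 * 2 ^ j * w := by
      have h' : o * e = o * (3 * 2 ^ j * w) := by rw [h, hw]; ring
      exact Nat.eq_of_mul_eq_mul_left hopos h'
    have hcow : Nat.Coprime o w := by
      by_contra hcon
      obtain ⟨p, pp, pu, pw⟩ := Nat.Prime.not_coprime_iff_dvd.mp hcon
      have hpe : p ∣ e := he ▸ Dvd.dvd.mul_left pw _
      exact absurd (Nat.eq_one_of_dvd_coprimes hcop pu hpe) pp.ne_one
    obtain ⟨f, g, hf, hg, hfg⟩ := coprime_pow4 hcow hw.symm
    obtain ⟨hfo, hgo⟩ := odd_parts hC hfg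
    exact ⟨f, g, hf, by rw [he, hg], hfo, hgo, hfg⟩

end helpers


private lemma descent {x k y : ℕ} (hk : 2 ≤ k) (h : x ^ 4 = 3 * 2 ^ k * y ^ 4 + 1)
    (hy : 0 < y) :
    ∃ x' k' y', 2 ≤ k' ∧ x' ^ 4 = 3 * 2 ^ k' * y' ^ 4 + 1 ∧ 0 < y' ∧ x' < x := by
  have h4k : 4 ≤ 2 ^ k := by
    calc (4:ℕ) = 2 ^ 2 := by norm_num
    _ ≤ 2 ^ k := Nat.pow_le_pow_right (by norm_num) hk
  have hy4 : 1 ≤ y ^ 4 := Nat.one_le_pow _ _ hy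
  have h13 : 13 ≤ x ^ 4 := by nlinarith
  have hx2 : 2 ≤ x := by
    by_contra hx
    push_neg at hx
    interval_cases x <;> norm_num at h13
  have hxodd : x % 2 = 1 := by
    rcases Nat.even_or_odd x with ⟨m, rfl⟩ | ho
    · exfalso
      obtain ⟨d1, hd1⟩ : 2 ∣ (m + m) ^ 4 := dvd_pow (⟨m, by ring⟩ : (2:ℕ) ∣ (m + m)) (n := 4) (by norm_num)
      obtain ⟨d2, hd2⟩ : 2 ∣ 3 * 2 ^ k * y ^ 4 :=
        Dvd.dvd.mul_right (Dvd.dvd.mul_left (dvd_pow_self 2 (by omega : k ≠ 0)) 3) _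
      have hcontra : 2 * d1 = 2 * d2 + 1 := by rw [← hd1, h, hd2]
      omega
    · exact Nat.odd_iff.mp ho
  obtain ⟨z, rfl⟩ : ∃ z, x = 2 * z + 1 := ⟨x / 2, by omega⟩
  have hz1 : 1 ≤ z := by omega
  have key8 : 3 * 2 ^ k * y ^ 4 = 8 * ((2 * z ^ 2 + 2 * z + 1) * (z * (z + 1))) := by
    have expand : (2 * z + 1) ^ 4 = 8 * ((2 * z ^ 2 + 2 * z + 1) * (z * (z + 1))) + 1 := by
      ring
    exact Nat.add_right_cancel (h.symm.trans expand)
  set M := 2 * z ^ 2 + 2 * z + 1 with hM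
  have hMpos : 0 < M := by positivity
  have hModd : M % 2 = 1 := by
    obtain ⟨w, hw⟩ : ∃ w, M = 2 * w + 1 := ⟨z ^ 2 + z, by rw [hM]; ring⟩
    omega
  have hM3 : ¬ 3 ∣ M := not_three_dvd_M z
  have hcopMz : Nat.Coprime M z := by
    have h1 : Nat.Coprime (1 + z * (2 * z + 2)) z :=
      (Nat.coprime_add_mul_left_left 1 z (2 * z + 2)).mpr (Nat.coprime_one_left z)
    have h2 : 1 + z * (2 * z + 2) = M := by rw [hM]; ring
    rwa [h2] at h1
  have hcopMz1 : Nat.Coprime M (z + 1) := by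
    have h1 : Nat.Coprime (1 + (z + 1) * (2 * z)) (z + 1) :=
      (Nat.coprime_add_mul_left_left 1 (z + 1) (2 * z)).mpr (Nat.coprime_one_left (z + 1))
    have h2 : 1 + (z + 1) * (2 * z) = M := by rw [hM]; ring
    rwa [h2] at h1
  have hcopM2 : Nat.Coprime M 2 := by
    rcases Nat.coprime_or_dvd_of_prime Nat.prime_two M with hc | hd
    · exact hc.symm
    · exfalso; omega
  have hcopM : Nat.Coprime M (3 * 2 ^ k) := by
    have c3 : Nat.Coprime M 3 := by
      rcases Nat.coprime_or_dvd_of_prime Nat.prime_three M with hc | hd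
      · exact hc.symm
      · exact absurd hd hM3
    exact c3.mul_right (hcopM2.pow_right k)
  have hMdvd : M ∣ y ^ 4 :=
    hcopM.dvd_of_dvd_mul_left ⟨8 * (z * (z + 1)), by rw [key8]; ring⟩
  obtain ⟨w, hw⟩ := hMdvd
  have hcopMw : Nat.Coprime M w := by
    by_contra hcon
    obtain ⟨p, pp, pM, pw⟩ := Nat.Prime.not_coprime_iff_dvd.mp hcon
    have hcan : 3 * 2 ^ k * w = 8 * (z * (z + 1)) := by
      have h' : M * (3 * 2 ^ k * w) = M * (8 * (z * (z + 1))) := by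
        calc M * (3 * 2 ^ k * w) = 3 * 2 ^ k * (M * w) := by ring
        _ = 3 * 2 ^ k * y ^ 4 := by rw [← hw]
        _ = 8 * (M * (z * (z + 1))) := by rw [key8]
        _ = M * (8 * (z * (z + 1))) := by ring
      exact Nat.eq_of_mul_eq_mul_left hMpos h'
    have hp8 : p ∣ 8 * (z * (z + 1)) := hcan ▸ Dvd.dvd.mul_left pw _
    have hp2 : p ≠ 2 := by
      rintro rfl
      obtain ⟨q, hq⟩ := pM
      omega
    have hcp8 : Nat.Coprime p 8 := by
      refine (Nat.Prime.coprime_iff_not_dvd pp).2 ?_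
      intro hd
      exact hp2 ((Nat.prime_dvd_prime_iff_eq pp Nat.prime_two).mp
        (pp.dvd_of_dvd_pow (show p ∣ 2 ^ 3 by norm_num [hd] )))
    have hpz : p ∣ z * (z + 1) := hcp8.dvd_of_dvd_mul_left hp8
    rcases (Nat.Prime.dvd_mul pp).mp hpz with hdz | hdz1
    · exact pp.ne_one (Nat.eq_one_of_dvd_coprimes hcopMz pM hdz)
    · exact pp.ne_one (Nat.eq_one_of_dvd_coprimes hcopMz1 pM hdz1)
  obtain ⟨a, c, hMa, hwc, hyac⟩ := coprime_pow4 hcopMw hw.symm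
  have haodd : a % 2 = 1 := by
    rcases Nat.mod_two_eq_zero_or_one a with ha | ha
    · exfalso
      obtain ⟨m, rfl⟩ : ∃ m, a = 2 * m := ⟨a / 2, by omega⟩
      obtain ⟨Q, hQ⟩ : ∃ Q, M = 2 * Q := ⟨8 * m ^ 4, by rw [hMa]; ring⟩
      omega
    · exact ha
  have hcore : 3 * 2 ^ k * c ^ 4 = 8 * (z * (z + 1)) := by
    have h' : M * (3 * 2 ^ k * c ^ 4) = M * (8 * (z * (z + 1))) := by
      calc M * (3 * 2 ^ k * c ^ 4) = 3 * 2 ^ k * (M * c ^ 4) := by ring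
      _ = 3 * 2 ^ k * (M * w) := by rw [hwc]
      _ = 3 * 2 ^ k * y ^ 4 := by rw [← hw]
      _ = 8 * (M * (z * (z + 1))) := by rw [key8]
      _ = M * (8 * (z * (z + 1))) := by ring
    exact Nat.eq_of_mul_eq_mul_left hMpos h'
  have hzzpos : 0 < 8 * (z * (z + 1)) :=
    Nat.mul_pos (by norm_num) (Nat.mul_pos (by omega) (by omega))
  have hc0 : c ≠ 0 := by
    rintro rfl
    rw [show (0:ℕ) ^ 4 = 0 by norm_num, mul_zero] at hcore
    rw [← hcore] at hzzpos
    exact absurd hzzpos (lt_irrefl 0)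
  obtain ⟨v, c₀, hc₀o, hcv⟩ := Nat.exists_eq_two_pow_mul_odd hc0
  have hc₀odd : c₀ % 2 = 1 := Nat.odd_iff.mp hc₀o
  have hcore2 : 3 * 2 ^ (k + 4 * v) * c₀ ^ 4 = 8 * (z * (z + 1)) := by
    rw [← hcore, hcv, mul_pow, ← pow_mul, pow_add]
    ring
  have hC16 : c₀ ^ 4 % 16 = 1 := pow4_mod16 hc₀odd
  have hJ3 : 3 ≤ k + 4 * v := by
    obtain ⟨C4, hC4e⟩ : ∃ C4, c₀ ^ 4 = C4 := ⟨_, rfl⟩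
    obtain ⟨Z, hZe⟩ : ∃ Z, z * (z + 1) = Z := ⟨_, rfl⟩
    rw [hC4e, hZe] at hcore2
    rw [hC4e] at hC16
    rcases (by omega : k + 4 * v = 0 ∨ k + 4 * v = 1 ∨ k + 4 * v = 2 ∨ 3 ≤ k + 4 * v)
      with he | he | he | he
    · rw [he] at hcore2; norm_num at hcore2; omega
    · rw [he] at hcore2; norm_num at hcore2; omega
    · rw [he] at hcore2; norm_num at hcore2; omega
    · exact he
  obtain ⟨j, hj⟩ : ∃ j, k + 4 * v = j + 3 := ⟨k + 4 * v - 3, by omega⟩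
  have hzz : z * (z + 1) = 3 * 2 ^ j * c₀ ^ 4 := by
    have h' : 8 * (3 * 2 ^ j * c₀ ^ 4) = 8 * (z * (z + 1)) := by
      rw [← hcore2, hj, pow_add]
      ring
    exact (Nat.eq_of_mul_eq_mul_left (by norm_num) h').symm
  have hA16 : M % 16 = 1 := by rw [hMa]; exact pow4_mod16 haodd
  rcases Nat.even_or_odd z with hze | hzo
  · -- z even : odd part is z + 1
    have hz1odd : (z + 1) % 2 = 1 := by
      rw [Nat.even_iff] at hze; omega
    have hcop : Nat.Coprime (z + 1) z := by
      have h1 := (Nat.coprime_add_mul_left_left 1 z 1).mpr (Nat.coprime_one_left z)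
      simpa using h1
    rcases split hc₀odd hz1odd hcop (by rw [← hzz]; ring) with
      ⟨f, g, hf, hg, hfodd, hgodd, hfg⟩ | ⟨f, g, hf, hg, hfodd, hgodd, hfg⟩
    · -- descent case : z + 1 = f^4, z = 3 * 2^j * g^4
      have hF := pow4_mod16 hfodd
      have hG := pow4_mod16 hgodd
      have hj4 : 4 ≤ j := L_a1 hF hG hf hg
      refine ⟨f, j, g, by omega, ?_, by omega, ?_⟩
      · rw [← hf, hg]
      · have hle : f ≤ f ^ 4 := Nat.le_self_pow (by norm_num) f
        rw [← hf] at hle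
        omega
    · -- kill : z + 1 = 3 * f^4, z = 2^j * g^4
      exfalso
      have hF := pow4_mod16 hfodd
      have hG := pow4_mod16 hgodd
      have hj1 : j = 1 := L_a2 hF hG (by rw [← hf, hg])
      subst hj1
      have hz2 : z = 2 * g ^ 4 := by rw [hg]; norm_num
      obtain ⟨H, hH⟩ : ∃ H, g ^ 4 = 2 * H + 1 := ⟨g ^ 4 / 2, by omega⟩
      have hMval : M = 32 * H ^ 2 + 40 * H + 13 := by rw [hM, hz2, hH]; ring
      obtain ⟨H2, hH2⟩ : ∃ H2, H ^ 2 = H2 := ⟨_, rfl⟩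
      rw [hH2] at hMval
      omega
  · -- z odd : odd part is z
    have hzo1 : z % 2 = 1 := Nat.odd_iff.mp hzo
    have hcop : Nat.Coprime z (z + 1) := by
      have h1 := (Nat.coprime_add_mul_left_left 1 z 1).mpr (Nat.coprime_one_left z)
      simpa using (Nat.Coprime.symm h1)
    rcases split hc₀odd hzo1 hcop hzz with
      ⟨f, g, hf, hg, hfodd, hgodd, hfg⟩ | ⟨f, g, hf, hg, hfodd, hgodd, hfg⟩
    · -- kill : z = f^4, z + 1 = 3 * 2^j * g^4
      exfalso
      exact L_b1 (pow4_mod16 hfodd) (pow4_mod16 hgodd) (by rw [← hg, ← hf])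
    · -- kill : z = 3 * f^4, z + 1 = 2^j * g^4
      exfalso
      have hj2 : j = 2 := L_b2 (pow4_mod16 hfodd) (pow4_mod16 hgodd) (by rw [← hg, ← hf])
      subst hj2
      have hz4 : z + 1 = 4 * g ^ 4 := by rw [hg]; norm_num
      obtain ⟨H, hH⟩ : ∃ H, g ^ 4 = 2 * H + 1 :=
        ⟨g ^ 4 / 2, by have := pow4_mod16 hgodd; omega⟩
      have hz8 : z = 8 * H + 3 := by omega
      have hMval : M = 128 * H ^ 2 + 112 * H + 25 := by rw [hM, hz8]; ring
      obtain ⟨H2, hH2⟩ : ∃ H2, H ^ 2 = H2 := ⟨_, rfl⟩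
      rw [hH2] at hMval
      omega



private lemma only_trivial : ∀ x k y : ℕ, 2 ≤ k → x ^ 4 = 3 * 2 ^ k * y ^ 4 + 1 → y = 0 := by
  intro x
  induction x using Nat.strong_induction_on with
  | _ x ih =>
    intro k y hk h
    by_contra hy
    obtain ⟨x', k', y', hk', h', hy', hlt⟩ := descent hk h (Nat.pos_of_ne_zero hy)
    exact absurd (ih x' hlt k' y' hk' h') (by omega)

/-- The only integer solutions to `s^4 - 12*t^4 = 1` are `s = ±1`, `t = 0`. -/
theorem stmt_13 (s t : ℤ) :
    s ^ 4 - 12 * t ^ 4 = 1 ↔ (s = 1 ∨ s = -1) ∧ t = 0 := by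
  constructor
  · intro h
    have hs4 : ((s.natAbs : ℤ)) ^ 4 = s ^ 4 := by
      calc ((s.natAbs : ℤ)) ^ 4 = |s| ^ 4 := by rw [Int.abs_eq_natAbs]
      _ = |s ^ 4| := pow_abs s 4
      _ = s ^ 4 := abs_of_nonneg (by positivity)
    have ht4 : ((t.natAbs : ℤ)) ^ 4 = t ^ 4 := by
      calc ((t.natAbs : ℤ)) ^ 4 = |t| ^ 4 := by rw [Int.abs_eq_natAbs]
      _ = |t ^ 4| := pow_abs t 4
      _ = t ^ 4 := abs_of_nonneg (by positivity)
    have hnat : ((s.natAbs : ℤ)) ^ 4 = 12 * ((t.natAbs : ℤ)) ^ 4 + 1 := by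
      rw [hs4, ht4]; linarith
    have hnat' : s.natAbs ^ 4 = 12 * t.natAbs ^ 4 + 1 := by exact_mod_cast hnat
    have h12 : s.natAbs ^ 4 = 3 * 2 ^ 2 * t.natAbs ^ 4 + 1 := by
      rw [hnat']; norm_num
    have ht0 : t.natAbs = 0 := only_trivial _ 2 _ (le_refl 2) h12
    have ht : t = 0 := Int.natAbs_eq_zero.mp ht0
    rw [ht0] at hnat'
    have hs1 : s.natAbs = 1 := by
      have h1 : s.natAbs ^ 4 = 1 := by simpa using hnat'
      exact (pow_eq_one_iff.mp h1).resolve_right (by norm_num)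
    refine ⟨?_, ht⟩
    have := Int.natAbs_eq_iff.mp hs1
    simpa using this
  · rintro ⟨hs | hs, ht⟩ <;> subst hs <;> subst ht <;> norm_num
end

section
/- There are no coprime integers a, b with a odd, a^2 - 3b^2 = 1, and -(a+b)(a+3b) a positive perfect square. -/
/-- There are no coprime integers `a, b` with `a` odd, `a^2 - 3b^2 = 1`, and
`-(a+b)(a+3b)` a positive perfect square. -/
theorem stmt_15 :
    ¬ ∃ a b : ℤ, IsCoprime a b ∧ Odd a ∧ a ^ 2 - 3 * b ^ 2 = 1 ∧
      ∃ u : ℤ, 0 < u ∧ -((a + b) * (a + 3 * b)) = u ^ 2 := by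
  rintro ⟨a, b, -, ⟨k, hk⟩, heq, u, -, hsq⟩
  -- b is even
  have hb : Even b := by
    by_contra hodd
    obtain ⟨c, hc⟩ := Int.not_even_iff_odd.1 hodd
    subst hk hc
    have h2 : 4 * (k ^ 2 + k - 3 * c ^ 2 - 3 * c) = 3 := by linear_combination heq
    obtain ⟨m, hm⟩ : ∃ m : ℤ, 4 * m = 3 := ⟨_, h2⟩
    omega
  obtain ⟨c, hc⟩ := hb
  obtain rfl : b = c + c := hc
  subst hk
  have key : ∀ k c u : ZMod 4, -(((2*k+1) + (c+c)) * ((2*k+1) + 3*(c+c))) ≠ u ^ 2 := by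
    decide
  apply key (k : ZMod 4) (c : ZMod 4) (u : ZMod 4)
  have := congrArg (fun z : ℤ => (z : ZMod 4)) hsq
  push_cast at this
  linear_combination this
end

section
/- Let u, v be coprime integers. If (u^4 + 12·u^3·v + 14·u^2·v^2 - 12·u·v^3 + v^4)^3 divides 3^9·(u^7·v^5 + 11·u^6·v^6 - u^5·v^7), then (u^4 + 12·u^3·v + 14·u^2·v^2 - 12·u·v^3 + v^4)^3 divides 2460375. -/
/-- If `u, v` are coprime integers and `(u^4+12u^3v+14u^2v^2-12uv^3+v^4)^3` divides
`3^9*(u^7v^5+11u^6v^6-u^5v^7)`, then it divides `2460375`. -/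
theorem stmt_16 (u v : ℤ) (huv : IsCoprime u v)
    (hdvd : (u ^ 4 + 12 * u ^ 3 * v + 14 * u ^ 2 * v ^ 2 - 12 * u * v ^ 3 + v ^ 4) ^ 3 ∣
      3 ^ 9 * (u ^ 7 * v ^ 5 + 11 * u ^ 6 * v ^ 6 - u ^ 5 * v ^ 7)) :
    (u ^ 4 + 12 * u ^ 3 * v + 14 * u ^ 2 * v ^ 2 - 12 * u * v ^ 3 + v ^ 4) ^ 3 ∣ 2460375 := by
  set F := u ^ 4 + 12 * u ^ 3 * v + 14 * u ^ 2 * v ^ 2 - 12 * u * v ^ 3 + v ^ 4 with hF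
  have hFu : IsCoprime F u := by
    have h := (huv.symm.pow_left : IsCoprime (v ^ 4) u).add_mul_left_left
      (u ^ 3 + 12 * u ^ 2 * v + 14 * u * v ^ 2 - 12 * v ^ 3)
    have e : F = v ^ 4 + u * (u ^ 3 + 12 * u ^ 2 * v + 14 * u * v ^ 2 - 12 * v ^ 3) := by
      rw [hF]; ring
    rwa [← e] at h
  have hFv : IsCoprime F v := by
    have h := (huv.pow_left : IsCoprime (u ^ 4) v).add_mul_left_left
      (12 * u ^ 3 + 14 * u ^ 2 * v - 12 * u * v ^ 2 + v ^ 3)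
    have e : F = u ^ 4 + v * (12 * u ^ 3 + 14 * u ^ 2 * v - 12 * u * v ^ 2 + v ^ 3) := by
      rw [hF]; ring
    rwa [← e] at h
  have hco5 : IsCoprime (F ^ 3) (u ^ 5 * v ^ 5) :=
    (hFu.pow (m := 3) (n := 5)).mul_right (hFv.pow (m := 3) (n := 5))
  have hco6 : IsCoprime (F ^ 3) (u ^ 6 * v ^ 6) :=
    (hFu.pow (m := 3) (n := 6)).mul_right (hFv.pow (m := 3) (n := 6))
  set G := u ^ 2 + 11 * u * v - v ^ 2 with hG
  have h1 : F ^ 3 ∣ u ^ 5 * v ^ 5 * (3 ^ 9 * G) := by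
    have e : u ^ 5 * v ^ 5 * (3 ^ 9 * G) =
        3 ^ 9 * (u ^ 7 * v ^ 5 + 11 * u ^ 6 * v ^ 6 - u ^ 5 * v ^ 7) := by rw [hG]; ring
    rw [e]; exact hdvd
  have h2 : F ^ 3 ∣ 3 ^ 9 * G := hco5.dvd_of_dvd_mul_left h1
  have h3 : F ^ 3 ∣ 2460375 * (u ^ 6 * v ^ 6) := by
    have key : 2460375 * (u ^ 6 * v ^ 6) =
        3 ^ 9 * F ^ 3 - (3 ^ 9 * G) * ((u ^ 2 + u * v - v ^ 2) *
          (3 * F ^ 2 - 3 * F * (G * (u ^ 2 + u * v - v ^ 2)) +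
            (G * (u ^ 2 + u * v - v ^ 2)) ^ 2)) := by
      rw [hF, hG]; ring
    rw [key]
    exact dvd_sub (dvd_mul_left _ _) (h2.mul_right _)
  exact hco6.dvd_of_dvd_mul_right h3
end

section
/- The curve 9·y^4 = t^8 - 4·t^7 - 14·t^6 + 35·t^4 + 56·t^3 + 42·t^2 + 12·t + 1 has no points over ℚ_3; equivalently, there are no 3-adic numbers t, y satisfying this equation. -/
private lemma key27 : ∀ a b : ZMod (3^3),
    9*b^4 ≠ a^8 - 4*a^7 - 14*a^6 + 35*a^4 + 56*a^3 + 42*a^2 + 12*a + 1 := by decide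

/-- The curve `9y^4 = t^8 - 4t^7 - 14t^6 + 35t^4 + 56t^3 + 42t^2 + 12t + 1` has no
points over `ℚ_3`. -/
theorem stmt_18 :
    ¬ ∃ t y : ℚ_[3], 9 * y ^ 4 =
      t ^ 8 - 4 * t ^ 7 - 14 * t ^ 6 + 35 * t ^ 4 + 56 * t ^ 3 + 42 * t ^ 2
        + 12 * t + 1 := by
  rintro ⟨t, y, h⟩
  -- Step 1: ‖t‖ ≤ 1
  have ht : ‖t‖ ≤ 1 := by
    by_contra hgt
    push_neg at hgt
    have ht0 : t ≠ 0 := by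
      rintro rfl; simp at hgt; linarith
    have ht1 : (1:ℝ) ≤ ‖t‖ := le_of_lt hgt
    -- bound each lower-order term
    have key : ∀ (c : ℤ) (k : ℕ), k ≤ 7 → ‖(c:ℚ_[3]) * t^k‖ ≤ ‖t‖^7 := by
      intro c k hk
      rw [norm_mul, norm_pow]
      calc ‖(c:ℚ_[3])‖ * ‖t‖^k ≤ 1 * ‖t‖^7 :=
            mul_le_mul (Padic.norm_int_le_one c)
              (pow_le_pow_right₀ ht1 hk) (by positivity) zero_le_one
        _ = ‖t‖^7 := one_mul _
    set r : ℚ_[3] := ((-4:ℤ):ℚ_[3])*t^7 + ((-14:ℤ):ℚ_[3])*t^6 + ((35:ℤ):ℚ_[3])*t^4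
        + ((56:ℤ):ℚ_[3])*t^3 + ((42:ℤ):ℚ_[3])*t^2 + ((12:ℤ):ℚ_[3])*t^1
        + ((1:ℤ):ℚ_[3])*t^0 with hr
    have hre : t ^ 8 - 4 * t ^ 7 - 14 * t ^ 6 + 35 * t ^ 4 + 56 * t ^ 3 + 42 * t ^ 2
        + 12 * t + 1 = t^8 + r := by rw [hr]; push_cast; ring
    have hrb : ‖r‖ ≤ ‖t‖^7 := by
      rw [hr]
      refine le_trans (Padic.nonarchimedean _ _) (max_le (le_trans (Padic.nonarchimedean _ _) (max_le (le_trans (Padic.nonarchimedean _ _) (max_le (le_trans (Padic.nonarchimedean _ _) (max_le (le_trans (Padic.nonarchimedean _ _) (max_le (le_trans (Padic.nonarchimedean _ _) (max_le ?_ ?_)) ?_)) ?_)) ?_)) ?_)) ?_)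
      · exact key _ 7 (by norm_num)
      · exact key _ 6 (by norm_num)
      · exact key _ 4 (by norm_num)
      · exact key _ 3 (by norm_num)
      · exact key _ 2 (by norm_num)
      · exact key _ 1 (by norm_num)
      · exact key _ 0 (by norm_num)
    have hlt : ‖r‖ < ‖t^8‖ := by
      rw [norm_pow]
      exact lt_of_le_of_lt hrb (pow_lt_pow_right₀ hgt (by norm_num))
    have hRHS : ‖t ^ 8 - 4 * t ^ 7 - 14 * t ^ 6 + 35 * t ^ 4 + 56 * t ^ 3 + 42 * t ^ 2
        + 12 * t + 1‖ = ‖t‖^8 := by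
      rw [hre, Padic.add_eq_max_of_ne (ne_of_gt hlt),
        max_eq_left (le_of_lt hlt), norm_pow]
    have hy0 : y ≠ 0 := by
      rintro rfl
      rw [← h] at hRHS
      simp at hRHS
      have : (0:ℝ) < ‖t‖^8 := by positivity
      rw [← hRHS] at this; simp at this
    have hnl : ‖9 * y^4‖ = ‖t‖^8 := by rw [h, hRHS]
    have h9 : ‖(9:ℚ_[3])‖ = (3:ℝ)^(-2:ℤ) := by
      have : (9:ℚ_[3]) = (3:ℚ_[3])^2 := by norm_num
      rw [this]
      exact_mod_cast Padic.norm_p_pow (p := 3) 2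
    rw [norm_mul, norm_pow, h9, Padic.norm_eq_zpow_neg_valuation hy0, Padic.norm_eq_zpow_neg_valuation ht0] at hnl
    simp only [Nat.cast_ofNat] at hnl
    rw [← zpow_natCast ((3:ℝ)^(-y.valuation)) 4, ← zpow_natCast ((3:ℝ)^(-t.valuation)) 8,
      ← zpow_mul, ← zpow_mul, ← zpow_add₀ (by norm_num : (3:ℝ) ≠ 0)] at hnl
    have := zpow_right_injective₀ (by norm_num : (0:ℝ) < 3) (by norm_num) hnl
    omega
  -- Step 2: ‖y‖ ≤ 1
  set T : ℤ_[3] := ⟨t, ht⟩ with hT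
  have hcoe : (((T^8 - 4*T^7 - 14*T^6 + 35*T^4 + 56*T^3 + 42*T^2 + 12*T + 1 : ℤ_[3])) : ℚ_[3])
      = t ^ 8 - 4 * t ^ 7 - 14 * t ^ 6 + 35 * t ^ 4 + 56 * t ^ 3 + 42 * t ^ 2 + 12 * t + 1 := by
    push_cast
    rfl
  have hy : ‖y‖ ≤ 1 := by
    by_cases hy0 : y = 0
    · simp [hy0]
    have hRHS1 : ‖9 * y^4‖ ≤ 1 := by
      rw [h, ← hcoe]; exact PadicInt.norm_le_one _
    have h9 : ‖(9:ℚ_[3])‖ = (3:ℝ)^(-2:ℤ) := by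
      have : (9:ℚ_[3]) = (3:ℚ_[3])^2 := by norm_num
      rw [this]
      exact_mod_cast Padic.norm_p_pow (p := 3) 2
    rw [norm_mul, norm_pow, h9, Padic.norm_eq_zpow_neg_valuation hy0] at hRHS1
    simp only [Nat.cast_ofNat] at hRHS1
    rw [← zpow_natCast ((3:ℝ)^(-y.valuation)) 4, ← zpow_mul,
      ← zpow_add₀ (by norm_num : (3:ℝ) ≠ 0)] at hRHS1
    have hexp : (-2 + -y.valuation * 4 : ℤ) ≤ 0 := by
      have := (zpow_le_zpow_iff_right₀ (by norm_num : (1:ℝ) < 3)).mp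
        (by simpa using hRHS1 : (3:ℝ)^(-2 + -y.valuation * 4 : ℤ) ≤ (3:ℝ)^(0:ℤ))
      exact this
    rw [Padic.norm_le_one_iff_val_nonneg]
    omega
  set Y : ℤ_[3] := ⟨y, hy⟩ with hY
  have hZ : (9*Y^4 : ℤ_[3]) = T^8 - 4*T^7 - 14*T^6 + 35*T^4 + 56*T^3 + 42*T^2 + 12*T + 1 := by
    apply Subtype.coe_injective
    push_cast
    exact h
  have := congrArg (PadicInt.toZModPow (p := 3) 3) hZ
  simp only [map_mul, map_pow, map_add, map_sub, map_ofNat, map_one] at this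
  exact key27 _ _ this
end
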